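/- The maximum number of edges of a triangle-free simple graph on n vertices equals the maximum number of edges of a loopless multigraph on n vertices, n ≥ 5, in which every 3-vertex induced subgraph has at most 2 edges; both maxima equal ⌊n²/4⌋. -/

import Mathlib

open Finset

/-- A loopless multigraph on `n` vertices, given by a symmetric edge-multiplicity
function with zero diagonal. -/
structure Multigraph (n : ℕ) where
  W : Fin n → Fin n → ℕ
  symm : ∀ u v, W u v = W v u
  loopless : ∀ v, W v v = 0

namespace Multigraph

variable {n : ℕ}

/-- Number of edges (with multiplicity) with both endpoints in `S`. -/
def edgesIn (G : Multigraph n) (S : Finset (Fin n)) : ℕ :=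
  ∑ u ∈ S, ∑ v ∈ S.filter (fun v => u < v), G.W u v

/-- Total number of edges (with multiplicity). -/
def edgeCount (G : Multigraph n) : ℕ := G.edgesIn Finset.univ

/-- Degree of a vertex: the number of edge-endpoints at `v`, with multiplicity. -/
def degree (G : Multigraph n) (v : Fin n) : ℕ := ∑ u, G.W v u

/-- A multigraph is almost regular if any two degrees differ by at most one. -/
def AlmostRegular (G : Multigraph n) : Prop :=
  ∀ u v, G.degree u ≤ G.degree v + 1

/-- The underlying simple graph (adjacency = at least one edge). -/
def toSimple (G : Multigraph n) : SimpleGraph (Fin n) where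
  Adj u v := u ≠ v ∧ 0 < G.W u v
  symm := by
    constructor
    intro u v h
    refine ⟨h.1.symm, ?_⟩
    rw [G.symm v u]
    exact h.2
  loopless := by
    constructor
    intro v h
    exact h.1 rfl

end Multigraph

/-- Number of edges of a simple graph with both endpoints in `S`. -/
noncomputable def SimpleGraph.edgesIn {V : Type*} (G : SimpleGraph V) (S : Finset V) : ℕ :=
  {e ∈ G.edgeSet | ∀ x ∈ e, x ∈ S}.ncard

/-! If `u v` carry an edge, then by the triple condition every third vertex sends at most
`2 - W u v` edges to `{u, v}`, so `d u + d v ≤ n` (for a double edge this needs `n ≥ 4`).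
Weighting by `W u v` and summing over ordered pairs gives `∑ d² ≤ n e`, and Cauchy–Schwarz
`(2 e)² ≤ n ∑ d²` turns this into `e ≤ n² / 4`. The balanced complete bipartite graph
`turanGraph n 2` attains the bound; for simple graphs this is Mathlib's Turán theorem at `r = 2`. -/

open SimpleGraph

namespace Multigraph

variable {n : ℕ}

def EdgesInTriplesLeTwo (G : Multigraph n) : Prop :=
  ∀ S : Finset (Fin n), #S = 3 → G.edgesIn S ≤ 2

theorem sum_sum_W_eq_two_mul_edgesIn (G : Multigraph n) (S : Finset (Fin n)) :
    ∑ u ∈ S, ∑ v ∈ S, G.W u v = 2 * G.edgesIn S := by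
  have hlower : ∑ u ∈ S, ∑ v ∈ S with ¬u < v, G.W u v = G.edgesIn S := by
    simp only [edgesIn, Finset.sum_filter]
    rw [Finset.sum_comm]
    refine Finset.sum_congr rfl fun u _ => Finset.sum_congr rfl fun v _ => ?_
    rcases lt_trichotomy u v with h | rfl | h
    · simp [h, h.not_gt, G.symm]
    · simp [G.loopless]
    · simp [h, h.not_gt]
  calc ∑ u ∈ S, ∑ v ∈ S, G.W u v
      = ∑ u ∈ S, (∑ v ∈ S with u < v, G.W u v + ∑ v ∈ S with ¬u < v, G.W u v) :=
        Finset.sum_congr rfl fun u _ => (Finset.sum_filter_add_sum_filter_not S _ _).symm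
    _ = 2 * G.edgesIn S := by rw [Finset.sum_add_distrib, hlower, edgesIn]; ring

theorem sum_degree_eq_two_mul_edgeCount (G : Multigraph n) :
    ∑ v, G.degree v = 2 * G.edgeCount :=
  G.sum_sum_W_eq_two_mul_edgesIn univ

theorem edgesIn_triple (G : Multigraph n) {u v w : Fin n} (huv : u ≠ v) (huw : u ≠ w)
    (hvw : v ≠ w) : G.edgesIn {u, v, w} = G.W u v + G.W u w + G.W v w := by
  have h := G.sum_sum_W_eq_two_mul_edgesIn {u, v, w}
  simp only [Finset.sum_insert (show u ∉ ({v, w} : Finset (Fin n)) by simp [huv, huw]),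
    Finset.sum_insert (show v ∉ ({w} : Finset (Fin n)) by simp [hvw]), Finset.sum_singleton,
    G.loopless, G.symm v u, G.symm w u, G.symm w v] at h
  omega

theorem degree_add_degree_eq (G : Multigraph n) {u v : Fin n} (huv : u ≠ v) :
    G.degree u + G.degree v = 2 * G.W u v + ∑ w ∈ {u, v}ᶜ, (G.W u w + G.W v w) := by
  rw [degree, degree, ← Finset.sum_add_distrib, ← Finset.sum_add_sum_compl {u, v},
    Finset.sum_pair huv, G.loopless, G.loopless, G.symm v u]
  ring

namespace EdgesInTriplesLeTwo

variable {G : Multigraph n}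

theorem W_add_W_add_W_le_two (hG : G.EdgesInTriplesLeTwo) {u v w : Fin n} (huv : u ≠ v)
    (huw : u ≠ w) (hvw : v ≠ w) : G.W u v + G.W u w + G.W v w ≤ 2 := by
  rw [← G.edgesIn_triple huv huw hvw]
  exact hG _ (Finset.card_eq_three.mpr ⟨u, v, w, huv, huw, hvw, rfl⟩)

theorem degree_add_degree_le (hG : G.EdgesInTriplesLeTwo) (hn : 4 ≤ n) {u v : Fin n}
    (huv : 0 < G.W u v) : G.degree u + G.degree v ≤ n := by
  have hne : u ≠ v := by rintro rfl; simp [G.loopless] at huv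
  have hcard : #({u, v} : Finset (Fin n))ᶜ = n - 2 := by
    rw [Finset.card_compl, Finset.card_pair hne, Fintype.card_fin]
  have htriple : ∀ w ∈ ({u, v} : Finset (Fin n))ᶜ, G.W u v + (G.W u w + G.W v w) ≤ 2 := by
    intro w hw
    simp only [Finset.mem_compl, Finset.mem_insert, Finset.mem_singleton, not_or] at hw
    simpa only [add_assoc] using hG.W_add_W_add_W_le_two hne (Ne.symm hw.1) (Ne.symm hw.2)
  obtain ⟨w, hw⟩ : ({u, v} : Finset (Fin n))ᶜ.Nonempty := by
    rw [← Finset.card_pos, hcard]; omega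
  have hle_two : G.W u v ≤ 2 := le_of_add_le_left (htriple w hw)
  have hrest :
      ∑ w ∈ ({u, v} : Finset (Fin n))ᶜ, (G.W u w + G.W v w) ≤ (n - 2) * (2 - G.W u v) := by
    rw [← hcard, ← smul_eq_mul]
    exact Finset.sum_le_card_nsmul _ _ _ fun w hw => by have := htriple w hw; omega
  rw [G.degree_add_degree_eq hne]
  interval_cases G.W u v <;> omega

theorem sum_degree_sq_le (hG : G.EdgesInTriplesLeTwo) (hn : 4 ≤ n) :
    ∑ v, G.degree v ^ 2 ≤ n * G.edgeCount := by
  have hleft : ∑ u, ∑ v, G.W u v * G.degree u = ∑ u, G.degree u ^ 2 :=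
    Finset.sum_congr rfl fun u _ => by rw [← Finset.sum_mul, sq, degree]
  have hright : ∑ u, ∑ v, G.W u v * G.degree v = ∑ u, G.degree u ^ 2 := by
    rw [Finset.sum_comm, ← hleft]
    simp only [G.symm]
  have hedge : ∑ u, ∑ v, G.W u v * (G.degree u + G.degree v) ≤ ∑ u, ∑ v, G.W u v * n := by
    refine Finset.sum_le_sum fun u _ => Finset.sum_le_sum fun v _ => ?_
    rcases Nat.eq_zero_or_pos (G.W u v) with h | h
    · simp [h]
    · exact Nat.mul_le_mul_left _ (hG.degree_add_degree_le hn h)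
  have htotal : ∑ u, ∑ v, G.W u v * n = 2 * G.edgeCount * n := by
    simp only [← Finset.sum_mul, G.sum_sum_W_eq_two_mul_edgesIn, edgeCount]
  simp only [mul_add, Finset.sum_add_distrib, hleft, hright, htotal] at hedge
  linarith

theorem edgeCount_le (hG : G.EdgesInTriplesLeTwo) (hn : 4 ≤ n) :
    G.edgeCount ≤ n ^ 2 / 4 := by
  have hcs : (∑ v, G.degree v) ^ 2 ≤ n * ∑ v, G.degree v ^ 2 := by
    simpa using sq_sum_le_card_mul_sum_sq (s := univ) (f := G.degree)
  rw [G.sum_degree_eq_two_mul_edgeCount] at hcs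
  have hsq : 4 * G.edgeCount * G.edgeCount ≤ n ^ 2 * G.edgeCount := by
    nlinarith [hG.sum_degree_sq_le hn]
  rcases Nat.eq_zero_or_pos G.edgeCount with h | h
  · simp [h]
  · rw [Nat.le_div_iff_mul_le four_pos, mul_comm]
    exact Nat.le_of_mul_le_mul_right hsq h

end EdgesInTriplesLeTwo

def ofSimpleGraph (G : SimpleGraph (Fin n)) [DecidableRel G.Adj] : Multigraph n where
  W u v := if G.Adj u v then 1 else 0
  symm u v := by simp only [G.adj_comm]
  loopless v := by simp

variable (G : SimpleGraph (Fin n)) [DecidableRel G.Adj]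

theorem degree_ofSimpleGraph (v : Fin n) : (ofSimpleGraph G).degree v = G.degree v := by
  rw [SimpleGraph.degree, neighborFinset_eq_filter, Finset.card_filter]
  rfl

theorem edgeCount_ofSimpleGraph : (ofSimpleGraph G).edgeCount = #G.edgeFinset := by
  have h := (ofSimpleGraph G).sum_degree_eq_two_mul_edgeCount
  simp only [degree_ofSimpleGraph, sum_degrees_eq_twice_card_edges] at h
  omega

theorem edgesInTriplesLeTwo_ofSimpleGraph (hG : G.CliqueFree 3) :
    (ofSimpleGraph G).EdgesInTriplesLeTwo := by
  intro S hS
  obtain ⟨u, v, w, huv, huw, hvw, rfl⟩ := Finset.card_eq_three.mp hS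
  rw [edgesIn_triple _ huv huw hvw]
  have hnot : ¬(G.Adj u v ∧ G.Adj u w ∧ G.Adj v w) := fun h =>
    hG _ (is3Clique_triple_iff.mpr h)
  simp only [ofSimpleGraph]
  split_ifs <;> simp_all

end Multigraph

theorem turan_edge_formula_two_eq_sq_div_four (n : ℕ) :
    (n ^ 2 - (n % 2) ^ 2) * (2 - 1) / (2 * 2) + (n % 2).choose 2 = n ^ 2 / 4 := by
  rcases Nat.mod_two_eq_zero_or_one n with h | h
  · simp [h]
  · obtain ⟨m, rfl⟩ := Nat.odd_iff.mpr h
    rw [h, show (2 * m + 1) ^ 2 = 4 * (m ^ 2 + m) + 1 by ring]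
    simp only [one_pow, add_tsub_cancel_right, Nat.choose_succ_self, add_zero]
    omega

theorem SimpleGraph.card_edgeFinset_turanGraph_two (n : ℕ) :
    #(turanGraph n 2).edgeFinset = n ^ 2 / 4 := by
  rw [card_edgeFinset_turanGraph, turan_edge_formula_two_eq_sq_div_four]

theorem SimpleGraph.CliqueFree.card_edgeFinset_le_sq_div_four {V : Type*} [Fintype V]
    {G : SimpleGraph V} [DecidableRel G.Adj] (hG : G.CliqueFree 3) :
    #G.edgeFinset ≤ Fintype.card V ^ 2 / 4 := by
  have := hG.card_edgeFinset_le (r := 2)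
  dsimp only at this
  rwa [turan_edge_formula_two_eq_sq_div_four] at this

theorem mantel_simple_and_multigraph (n : ℕ) (hn : 5 ≤ n) :
    IsGreatest {m | ∃ G : SimpleGraph (Fin n), G.CliqueFree 3 ∧ G.edgeSet.ncard = m}
      (n ^ 2 / 4) ∧
    IsGreatest {m | ∃ G : Multigraph n,
      (∀ S : Finset (Fin n), S.card = 3 → G.edgesIn S ≤ 2) ∧ G.edgeCount = m}
      (n ^ 2 / 4) := by
  classical
  have hturan := turanGraph_cliqueFree (n := n) two_pos
  have hcard := card_edgeFinset_turanGraph_two n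
  refine ⟨⟨⟨turanGraph n 2, hturan, ?_⟩, ?_⟩, ⟨⟨Multigraph.ofSimpleGraph (turanGraph n 2),
    Multigraph.edgesInTriplesLeTwo_ofSimpleGraph _ hturan, ?_⟩, ?_⟩⟩
  · rw [← coe_edgeFinset, Set.ncard_coe_finset, hcard]
  · rintro _ ⟨G, hG, rfl⟩
    rw [← coe_edgeFinset, Set.ncard_coe_finset]
    simpa using hG.card_edgeFinset_le_sq_div_four
  · rw [Multigraph.edgeCount_ofSimpleGraph, hcard]
  · rintro _ ⟨G, hG, rfl⟩
    exact Multigraph.EdgesInTriplesLeTwo.edgeCount_le hG (by omega)
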